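/- arXiv:1410.5750 — 5 statements merged into one kernel-verified Lean document; each statement's English description precedes it below -/
import Mathlib

section
/- Let r ≥ 2 be even and let G be the blow-up of K_{r+2} minus a perfect matching by cliques of size h (as above). Then every copy of K_{r+1} in G contains at least r/2 edges lying inside a single blow-up clique, and consequently the number of pairwise edge-disjoint copies of K_{r+1} in G is at most (r+2)·binom(h,2)/(r/2), which is strictly less than e(G)/binom(r+1,2); hence G has no K_{r+1}-decomposition. -/
/-! Two parts of `K_{r+2} - M` are non-adjacent exactly when they are matched, so the vertices
of a copy of `K_{r+1}` that fall into the same matched pair of parts fall into the same part.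
Its `r + 1` vertices meet at most `r/2 + 1` pairs, so at least `r/2` of its edges are internal.
As `G` has only `(r+2)·binom(h,2)` internal edges, edge-disjoint copies number at most
`(r+2)·binom(h,2)/(r/2)`. On the other hand every vertex misses only the `h` vertices of its
matched part, so `2e(G) ≥ (r+2)h((r+1)h-1)`, and a decomposition needs at least
`e(G)/binom(r+1,2)` copies, which is more. -/

open SimpleGraph

namespace Paper

variable {V W : Type*}

/-- The copy of `F` inside a graph on vertex set `V` given by an injective map `φ`. -/
def copyAt (F : SimpleGraph W) (φ : W ↪ V) : SimpleGraph V where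
  Adj x y := ∃ a b, F.Adj a b ∧ φ a = x ∧ φ b = y
  symm := ⟨by rintro x y ⟨a, b, h, rfl, rfl⟩; exact ⟨b, a, h.symm, rfl, rfl⟩⟩
  loopless := ⟨by
    rintro x ⟨a, b, h, rfl, hb⟩
    exact F.loopless.irrefl a ((φ.injective hb) ▸ h)⟩

/-- `s` is an `F`-decomposition of `G`: a family of copies of `F` in `G`, pairwise
edge-disjoint, whose edge sets cover every edge of `G`. -/
def IsDecompositionOn (F : SimpleGraph W) (G : SimpleGraph V) (s : Set (W ↪ V)) : Prop :=
  (∀ φ ∈ s, copyAt F φ ≤ G) ∧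
  (∀ e ∈ G.edgeSet, ∃ φ ∈ s, e ∈ (copyAt F φ).edgeSet) ∧
  s.Pairwise fun φ ψ => Disjoint (copyAt F φ).edgeSet (copyAt F ψ).edgeSet

/-- `G` has an `F`-decomposition: its edge set can be partitioned into copies of `F`. -/
def HasDecomposition (F : SimpleGraph W) (G : SimpleGraph V) : Prop :=
  ∃ s : Set (W ↪ V), IsDecompositionOn F G s

/-- The number of edges of a graph. -/
noncomputable def ecard (G : SimpleGraph V) : ℕ := Nat.card G.edgeSet

/-- The degree of a vertex. -/
noncomputable def ndeg (G : SimpleGraph V) (v : V) : ℕ := Nat.card (G.neighborSet v)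

/-- The blow-up of `K_{r+2}` minus the perfect matching `{2k, 2k+1}` by cliques of
size `h`: vertices `(i, a)`, with `(i, a) ∼ (j, b)` iff they are distinct and either
`i = j` (edges inside a blow-up clique) or `i, j` are not matched in `M`. -/
def matchingBlowup (r h : ℕ) : SimpleGraph (Fin (r + 2) × Fin h) where
  Adj x y := x ≠ y ∧ (x.1 = y.1 ∨ (x.1 : ℕ) / 2 ≠ (y.1 : ℕ) / 2)
  symm := ⟨by
    rintro x y ⟨hne, hc⟩
    refine ⟨hne.symm, ?_⟩
    rcases hc with h1 | h1
    · exact Or.inl h1.symm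
    · exact Or.inr fun hh => h1 hh.symm⟩
  loopless := ⟨by rintro x ⟨hne, -⟩; exact hne rfl⟩

/-- An edge of the blow-up is internal if it lies inside one of the blow-up cliques. -/
def InternalEdge (r h : ℕ) (e : Sym2 (Fin (r + 2) × Fin h)) : Prop :=
  ∃ x y : Fin (r + 2) × Fin h, e = s(x, y) ∧ x.1 = y.1

theorem copyAt_eq_map (F : SimpleGraph W) (φ : W ↪ V) : copyAt F φ = F.map φ := by
  ext x y
  simp [copyAt, map_adj]

theorem ncard_mul_le_of_pairwiseDisjoint {ι α : Type*} [Finite α] {S : Set ι} (hS : S.Finite)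
    {A : ι → Set α} {T : Set α} {k : ℕ} (hAT : ∀ i ∈ S, A i ⊆ T) (hk : ∀ i ∈ S, k ≤ (A i).ncard)
    (hdisj : S.PairwiseDisjoint A) : S.ncard * k ≤ T.ncard := by
  obtain ⟨s, rfl⟩ := hS.exists_finset_coe
  calc (s : Set ι).ncard * k = ∑ i ∈ s, k := by simp
    _ ≤ ∑ i ∈ s, (A i).ncard := Finset.sum_le_sum hk
    _ = (⋃ i ∈ (s : Set ι), A i).ncard := by
      rw [hS.ncard_biUnion (fun i _ => (A i).toFinite) hdisj, finsum_mem_coe_finset]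
    _ ≤ T.ncard := Set.ncard_le_ncard (Set.iUnion₂_subset hAT)

theorem ncard_le_mul_of_subset_biUnion {ι α : Type*} [Finite α] {S : Set ι} (hS : S.Finite)
    {A : ι → Set α} {T : Set α} {m : ℕ} (hT : T ⊆ ⋃ i ∈ S, A i) (hm : ∀ i ∈ S, (A i).ncard ≤ m) :
    T.ncard ≤ S.ncard * m := by
  obtain ⟨s, rfl⟩ := hS.exists_finset_coe
  calc T.ncard ≤ (⋃ i ∈ s, A i).ncard := Set.ncard_le_ncard hT
    _ ≤ ∑ i ∈ s, (A i).ncard := s.set_ncard_biUnion_le A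
    _ ≤ ∑ i ∈ s, m := Finset.sum_le_sum hm
    _ = (s : Set ι).ncard * m := by simp

theorem card_sub_card_range_le_ncard_fiberPairs {α β : Type*} [Finite α] (f : α → β) :
    Nat.card α - Nat.card (Set.range f) ≤ {e : Sym2 α | ¬ e.IsDiag ∧ (e.map f).IsDiag}.ncard := by
  set g := Set.rangeSplitting f
  have hcompl : (Set.range g)ᶜ.ncard = Nat.card α - Nat.card (Set.range f) := by
    rw [Set.ncard_compl, ← Nat.card_coe_set_eq,
      Nat.card_range_of_injective (Set.rangeSplitting_injective f)]
  rw [← hcompl]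
  -- `a` outside the chosen representatives goes to the pair it forms with its representative
  refine Set.ncard_le_ncard_of_injOn (fun a => s(a, g (Set.rangeFactorization f a))) ?_ ?_
    (Set.toFinite _)
  · intro a ha
    refine ⟨fun hd => ha ⟨_, (Sym2.mk_isDiag_iff.mp hd).symm⟩, ?_⟩
    simp [g, Set.apply_rangeSplitting, Set.rangeFactorization]
  · intro a ha b hb hab
    rcases Sym2.eq_iff.mp hab with ⟨hab, -⟩ | ⟨hab, -⟩
    · exact hab
    · exact absurd ⟨_, hab.symm⟩ ha

open Finset in
theorem card_mul_sub_le_two_mul_card_edgeFinset {V : Type*} [Fintype V] [DecidableEq V]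
    (G : SimpleGraph V) [DecidableRel G.Adj] {d : ℕ} (hd : ∀ v, Gᶜ.degree v ≤ d) :
    Fintype.card V * (Fintype.card V - 1 - d) ≤ 2 * #G.edgeFinset := by
  have hdeg (v : V) : Fintype.card V - 1 - d ≤ G.degree v := by
    have := hd v
    rw [degree_compl] at this
    omega
  rw [← sum_degrees_eq_twice_card_edges]
  simpa using card_nsmul_le_sum univ (fun v => G.degree v) _ fun v _ => hdeg v

theorem ncard_edgeSet_copyAt (F : SimpleGraph W) (φ : W ↪ V) :
    (copyAt F φ).edgeSet.ncard = F.edgeSet.ncard := by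
  rw [copyAt_eq_map, edgeSet_map]
  exact Set.ncard_image_of_injective _ (Sym2.map.injective φ.injective)

theorem ncard_edgeSet_top_fin (n : ℕ) : (⊤ : SimpleGraph (Fin n)).edgeSet.ncard = n.choose 2 := by
  rw [← coe_edgeFinset, Set.ncard_coe_finset, card_edgeFinset_top_eq_card_choose_two,
    Fintype.card_fin]

theorem ecard_div_choose_two_le_ncard [Finite V] {G : SimpleGraph V} {n : ℕ} {S : Set (Fin n ↪ V)}
    (hcover : ∀ e ∈ G.edgeSet, ∃ φ ∈ S, e ∈ (copyAt ⊤ φ).edgeSet) :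
    ecard G / n.choose 2 ≤ S.ncard := by
  refine Nat.div_le_of_le_mul ?_
  rw [ecard, Nat.card_coe_set_eq, mul_comm]
  refine ncard_le_mul_of_subset_biUnion S.toFinite (A := fun φ => (copyAt ⊤ φ).edgeSet)
    (fun e he => ?_) fun φ _ => ?_
  · obtain ⟨φ, hφ, he⟩ := hcover e he
    exact Set.mem_biUnion hφ he
  · rw [ncard_edgeSet_copyAt, ncard_edgeSet_top_fin]

theorem le_two_mul_ecard_matchingBlowup (r h : ℕ) :
    (r + 2) * h * ((r + 1) * h - 1) ≤ 2 * ecard (matchingBlowup r h) := by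
  classical
  have hcompl (v : Fin (r + 2) × Fin h) : (matchingBlowup r h)ᶜ.degree v ≤ h := by
    rw [← card_neighborFinset_eq_degree]
    -- the non-neighbours of `v` all lie in the one part matched with `v.1`
    refine (Finset.card_le_card_of_injOn Prod.snd
      (fun _ _ => Finset.mem_coe.mpr (Finset.mem_univ _)) ?_).trans (by simp)
    intro x hx y hy hxy
    rw [Finset.mem_coe, mem_neighborFinset, compl_adj] at hx hy
    obtain ⟨hvx, hx⟩ := hx
    obtain ⟨hvy, hy⟩ := hy
    simp only [matchingBlowup, ne_eq, hvx, hvy, not_false_eq_true, true_and, not_or, not_not,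
      Fin.ext_iff] at hx hy
    exact Prod.ext (Fin.ext (by omega)) hxy
  have := card_mul_sub_le_two_mul_card_edgeFinset _ hcompl
  rw [ecard, Nat.card_eq_fintype_card, ← edgeFinset_card]
  simp only [Fintype.card_prod, Fintype.card_fin] at this
  rwa [show (r + 2) * h - 1 - h = (r + 1) * h - 1 by
    rw [show (r + 2) * h = (r + 1) * h + h by ring]; omega] at this

theorem ncard_internalEdges_matchingBlowup_le (r h : ℕ) :
    {e | e ∈ (matchingBlowup r h).edgeSet ∧ InternalEdge r h e}.ncard ≤ (r + 2) * h.choose 2 := by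
  let embed : Fin (r + 2) × (⊤ : SimpleGraph (Fin h)).edgeSet → Sym2 (Fin (r + 2) × Fin h) :=
    fun p => Sym2.map (p.1, ·) p.2
  have hsub : {e | e ∈ (matchingBlowup r h).edgeSet ∧ InternalEdge r h e} ⊆ Set.range embed := by
    rintro _ ⟨hadj, x, y, rfl, hxy⟩
    have hne : x.2 ≠ y.2 := fun h2 => hadj.1 (Prod.ext hxy h2)
    exact ⟨(x.1, ⟨s(x.2, y.2), by simpa using hne⟩), by
      simp only [embed, Sym2.map_mk]
      rw [show (x.1, y.2) = y from Prod.ext hxy rfl]⟩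
  calc _ ≤ Nat.card (Set.range embed) := Nat.card_coe_set_eq _ ▸ Set.ncard_le_ncard hsub
    _ ≤ Nat.card (Fin (r + 2) × (⊤ : SimpleGraph (Fin h)).edgeSet) := Finite.card_range_le _
    _ = (r + 2) * h.choose 2 := by
      rw [Nat.card_prod, Nat.card_coe_set_eq, ncard_edgeSet_top_fin, Nat.card_eq_fintype_card,
        Fintype.card_fin]

theorem le_ncard_internalEdges_copyAt {r h : ℕ} {φ : Fin (r + 1) ↪ Fin (r + 2) × Fin h}
    (hφ : copyAt ⊤ φ ≤ matchingBlowup r h) :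
    r / 2 ≤ {e | e ∈ (copyAt ⊤ φ).edgeSet ∧ InternalEdge r h e}.ncard := by
  -- `φ a` lies in the matched pair of parts `{2 * pair a, 2 * pair a + 1}`
  let pair : Fin (r + 1) → ℕ := fun a => (φ a).1 / 2
  have hpairs : Nat.card (Set.range pair) ≤ (r + 1) / 2 + 1 := by
    rw [Nat.card_coe_set_eq, ← Finset.card_range ((r + 1) / 2 + 1), ← Set.ncard_coe_finset]
    refine Set.ncard_le_ncard ?_
    rintro _ ⟨a, rfl⟩
    simp only [Finset.coe_range, Set.mem_Iio, pair]
    omega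
  have hsub : Sym2.map φ '' {e : Sym2 (Fin (r + 1)) | ¬ e.IsDiag ∧ (e.map pair).IsDiag} ⊆
      {e | e ∈ (copyAt ⊤ φ).edgeSet ∧ InternalEdge r h e} := by
    rintro _ ⟨e, ⟨hnd, hpair⟩, rfl⟩
    induction e using Sym2.ind with | _ a b => ?_
    simp only [Sym2.mk_isDiag_iff, Sym2.map_mk] at hnd hpair
    have hadj : (copyAt ⊤ φ).Adj (φ a) (φ b) := ⟨a, b, hnd, rfl, rfl⟩
    refine ⟨hadj, φ a, φ b, Sym2.map_mk .., ?_⟩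
    exact (hφ hadj).2.resolve_right (not_not.mpr hpair)
  calc r / 2 ≤ Nat.card (Fin (r + 1)) - Nat.card (Set.range pair) := by
        rw [Nat.card_eq_fintype_card, Fintype.card_fin]; omega
    _ ≤ {e : Sym2 (Fin (r + 1)) | ¬ e.IsDiag ∧ (e.map pair).IsDiag}.ncard :=
        card_sub_card_range_le_ncard_fiberPairs pair
    _ = (Sym2.map φ '' {e : Sym2 (Fin (r + 1)) | ¬ e.IsDiag ∧ (e.map pair).IsDiag}).ncard :=
        (Set.ncard_image_of_injective _ (Sym2.map.injective φ.injective)).symm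
    _ ≤ _ := Set.ncard_le_ncard hsub

theorem mul_choose_two_div_lt_div_choose_two {r h e : ℕ} (hr : 2 ≤ r) (hre : Even r) (hh : 0 < h)
    (he : (r + 2) * h * ((r + 1) * h - 1) ≤ 2 * e) :
    (r + 2) * h.choose 2 / (r / 2) < e / (r + 1).choose 2 := by
  obtain ⟨k, rfl⟩ := hre
  obtain ⟨m, rfl⟩ : ∃ m, h = m + 1 := ⟨h - 1, by omega⟩
  have hm : (m + 1).choose 2 * 2 = (m + 1) * m := by
    simpa using (Nat.add_one_mul_choose_eq m 1).symm
  have hk : (k + k + 1).choose 2 * 2 = (k + k + 1) * (k + k) := by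
    simpa using (Nat.add_one_mul_choose_eq (k + k) 1).symm
  rw [show (k + k) / 2 = k by omega]
  set q := (k + k + 2) * (m + 1).choose 2 / k
  have hq : q * k ≤ (k + k + 2) * (m + 1).choose 2 := Nat.div_mul_le_self _ _
  rw [Nat.lt_iff_add_one_le, Nat.le_div_iff_mul_le (Nat.choose_pos (by omega))]
  rw [show (k + k + 1) * (m + 1) - 1 = (k + k + 1) * m + (k + k) by rw [mul_add_one]; omega]
    at he
  nlinarith

theorem ncard_le_of_pairwise_disjoint_copies {r h : ℕ} (hr : 2 ≤ r)
    {S : Set (Fin (r + 1) ↪ Fin (r + 2) × Fin h)} (hle : ∀ φ ∈ S, copyAt ⊤ φ ≤ matchingBlowup r h)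
    (hdisj : S.Pairwise fun φ ψ => Disjoint (copyAt ⊤ φ).edgeSet (copyAt ⊤ ψ).edgeSet) :
    S.ncard ≤ (r + 2) * h.choose 2 / (r / 2) := by
  rw [Nat.le_div_iff_mul_le (by omega)]
  refine le_trans ?_ (ncard_internalEdges_matchingBlowup_le r h)
  exact ncard_mul_le_of_pairwiseDisjoint S.toFinite
    (A := fun φ => {e | e ∈ (copyAt ⊤ φ).edgeSet ∧ InternalEdge r h e})
    (fun φ hφ e he => ⟨edgeSet_mono (hle φ hφ) he.1, he.2⟩)
    (fun φ hφ => le_ncard_internalEdges_copyAt (hle φ hφ))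
    (hdisj.mono' fun _ _ hd => hd.mono Set.inter_subset_left Set.inter_subset_left)

theorem matchingBlowup_not_decomposable_general (r s h : ℕ) (hr : 2 ≤ r)
    (hre : Even r) (hh : h = (s * r + 1) * (r + 1)) :
    (∀ φ : Fin (r + 1) ↪ Fin (r + 2) × Fin h,
      copyAt (⊤ : SimpleGraph (Fin (r + 1))) φ ≤ matchingBlowup r h →
      r / 2 ≤ Nat.card
        ↥{e | e ∈ (copyAt (⊤ : SimpleGraph (Fin (r + 1))) φ).edgeSet ∧ InternalEdge r h e}) ∧
    (∀ S : Set (Fin (r + 1) ↪ Fin (r + 2) × Fin h),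
      (∀ φ ∈ S, copyAt (⊤ : SimpleGraph (Fin (r + 1))) φ ≤ matchingBlowup r h) →
      (S.Pairwise fun φ ψ => Disjoint (copyAt (⊤ : SimpleGraph (Fin (r + 1))) φ).edgeSet
        (copyAt (⊤ : SimpleGraph (Fin (r + 1))) ψ).edgeSet) →
      Nat.card S ≤ (r + 2) * h.choose 2 / (r / 2)) ∧
    (r + 2) * h.choose 2 / (r / 2) < ecard (matchingBlowup r h) / (r + 1).choose 2 ∧
    ¬ HasDecomposition (⊤ : SimpleGraph (Fin (r + 1))) (matchingBlowup r h) := by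
  have hlt : (r + 2) * h.choose 2 / (r / 2) < ecard (matchingBlowup r h) / (r + 1).choose 2 :=
    mul_choose_two_div_lt_div_choose_two hr hre (by rw [hh]; positivity)
      (le_two_mul_ecard_matchingBlowup r h)
  refine ⟨fun φ hφ => ?_, fun S hle hdisj => ?_, hlt, ?_⟩
  · rw [Nat.card_coe_set_eq]
    exact le_ncard_internalEdges_copyAt hφ
  · rw [Nat.card_coe_set_eq]
    exact ncard_le_of_pairwise_disjoint_copies hr hle hdisj
  · rintro ⟨S, hle, hcover, hdisj⟩
    have := (ecard_div_choose_two_le_ncard hcover).trans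
      (ncard_le_of_pairwise_disjoint_copies hr hle hdisj)
    omega

/-- Let `r ≥ 2` be even, `h = (sr+1)(r+1)`, and `G` the blow-up of `K_{r+2}` minus a
perfect matching by cliques `K_h`. Every copy of `K_{r+1}` in `G` contains at least
`r/2` internal edges; hence any family of pairwise edge-disjoint copies of `K_{r+1}`
has size at most `(r+2)·binom(h,2)/(r/2)`, which is strictly smaller than
`e(G)/binom(r+1,2)`, and so `G` has no `K_{r+1}`-decomposition. -/
theorem matchingBlowup_not_decomposable (r s h : ℕ) (hr : 2 ≤ r)
    (hre : Even r) (hs : 1 ≤ s) (hh : h = (s * r + 1) * (r + 1)) :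
    (∀ φ : Fin (r + 1) ↪ Fin (r + 2) × Fin h,
      copyAt (⊤ : SimpleGraph (Fin (r + 1))) φ ≤ matchingBlowup r h →
      r / 2 ≤ Nat.card
        ↥{e | e ∈ (copyAt (⊤ : SimpleGraph (Fin (r + 1))) φ).edgeSet ∧ InternalEdge r h e}) ∧
    (∀ S : Set (Fin (r + 1) ↪ Fin (r + 2) × Fin h),
      (∀ φ ∈ S, copyAt (⊤ : SimpleGraph (Fin (r + 1))) φ ≤ matchingBlowup r h) →
      (S.Pairwise fun φ ψ => Disjoint (copyAt (⊤ : SimpleGraph (Fin (r + 1))) φ).edgeSet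
        (copyAt (⊤ : SimpleGraph (Fin (r + 1))) ψ).edgeSet) →
      Nat.card S ≤ (r + 2) * h.choose 2 / (r / 2)) ∧
    (r + 2) * h.choose 2 / (r / 2) < ecard (matchingBlowup r h) / (r + 1).choose 2 ∧
    ¬ HasDecomposition (⊤ : SimpleGraph (Fin (r + 1))) (matchingBlowup r h) :=
  matchingBlowup_not_decomposable_general r s h hr hre hh

end Paper
end

section
/- The relation ~_F is transitive in the following sense: if H, H', H'' are pairwise vertex-disjoint graphs, T_1 is an (H,H')_F-transformer, T_2 is an (H',H'')_F-transformer, and V(T_1) ∩ V(T_2) = V(H'), then T_1 ∪ H' ∪ T_2 is an (H,H'')_F-transformer. -/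
open SimpleGraph

namespace Paper

variable {V W : Type*}

/-- `T` is an `(H, H')_F`-transformer: `T` is edge-disjoint from `H` and `H'`,
`V(H ∪ H') ⊆ V(T)`, `T` has no edges inside `V(H ∪ H')`, and both `T ∪ H` and
`T ∪ H'` have `F`-decompositions. -/
def IsTransformer {V W : Type*} (F : SimpleGraph W) (H H' T : SimpleGraph V) : Prop :=
  Disjoint H.edgeSet T.edgeSet ∧ Disjoint H'.edgeSet T.edgeSet ∧
  H.support ∪ H'.support ⊆ T.support ∧
  (∀ x ∈ H.support ∪ H'.support, ∀ y ∈ H.support ∪ H'.support, ¬ T.Adj x y) ∧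
  HasDecomposition F (T ⊔ H) ∧ HasDecomposition F (T ⊔ H')

/-!
Since `V(T₁) ∩ V(T₂) = V(H')`, the graph `T₂` avoids `V(H)`, `T₁` avoids `V(H'')`, and
`T₁, T₂` are edge-disjoint because `T₁` has no edge inside `V(H')`. So
`(T₁ ∪ H' ∪ T₂) ∪ H` is the edge-disjoint union of `T₁ ∪ H` and `T₂ ∪ H'`, and the union of
their `F`-decompositions decomposes it; symmetrically `(T₁ ∪ H' ∪ T₂) ∪ H''` is the
edge-disjoint union of `T₂ ∪ H''` and `T₁ ∪ H'`.
-/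

lemma IsDecompositionOn.union {F : SimpleGraph W} {G₁ G₂ : SimpleGraph V} {s₁ s₂ : Set (W ↪ V)}
    (hd : Disjoint G₁ G₂) (h₁ : IsDecompositionOn F G₁ s₁) (h₂ : IsDecompositionOn F G₂ s₂) :
    IsDecompositionOn F (G₁ ⊔ G₂) (s₁ ∪ s₂) := by
  obtain ⟨hle₁, hcov₁, hp₁⟩ := h₁
  obtain ⟨hle₂, hcov₂, hp₂⟩ := h₂
  have hcross : ∀ φ ∈ s₁, ∀ ψ ∈ s₂, Disjoint (copyAt F φ).edgeSet (copyAt F ψ).edgeSet :=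
    fun φ hφ ψ hψ => disjoint_edgeSet.2 (hd.mono (hle₁ φ hφ) (hle₂ ψ hψ))
  refine ⟨?_, ?_, ?_⟩
  · rintro φ (hφ | hφ)
    · exact (hle₁ φ hφ).trans le_sup_left
    · exact (hle₂ φ hφ).trans le_sup_right
  · intro e he
    rw [edgeSet_sup] at he
    rcases he with he | he
    · obtain ⟨φ, hφ, h⟩ := hcov₁ e he
      exact ⟨φ, Or.inl hφ, h⟩
    · obtain ⟨φ, hφ, h⟩ := hcov₂ e he
      exact ⟨φ, Or.inr hφ, h⟩
  · rintro φ (hφ | hφ) ψ (hψ | hψ) hne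
    · exact hp₁ hφ hψ hne
    · exact hcross φ hφ ψ hψ
    · exact (hcross ψ hψ φ hφ).symm
    · exact hp₂ hφ hψ hne

lemma HasDecomposition.sup {F : SimpleGraph W} {G₁ G₂ : SimpleGraph V} (hd : Disjoint G₁ G₂)
    (h₁ : HasDecomposition F G₁) (h₂ : HasDecomposition F G₂) :
    HasDecomposition F (G₁ ⊔ G₂) :=
  let ⟨s₁, hs₁⟩ := h₁
  let ⟨s₂, hs₂⟩ := h₂
  ⟨s₁ ∪ s₂, hs₁.union hd hs₂⟩

lemma disjoint_of_subset_of_inter_eq {α : Type*} {A B C D : Set α} (hAD : Disjoint A D)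
    (hAB : A ⊆ B) (hBC : B ∩ C = D) : Disjoint A C :=
  Set.disjoint_left.2 fun _ hA hC => Set.disjoint_left.1 hAD hA (hBC ▸ ⟨hAB hA, hC⟩)

lemma disjoint_of_support_inter_subset {G G' : SimpleGraph V} {S : Set V}
    (hS : G.support ∩ G'.support ⊆ S) (hG : ∀ x ∈ S, ∀ y ∈ S, ¬ G.Adj x y) :
    Disjoint G G' :=
  disjoint_left.2 fun x y h h' =>
    hG x (hS ⟨⟨y, h⟩, ⟨y, h'⟩⟩) y (hS ⟨⟨x, h.symm⟩, ⟨x, h'.symm⟩⟩) h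

lemma not_adj_of_disjoint_support {G : SimpleGraph V} {S : Set V} (h : Disjoint S G.support) :
    ∀ x ∈ S, ∀ y ∈ S, ¬ G.Adj x y :=
  fun _ hx _ _ hxy => Set.disjoint_left.1 h hx ⟨_, hxy⟩

lemma not_adj_union_of_disjoint_support {G : SimpleGraph V} {A B : Set V}
    (hA : ∀ x ∈ A, ∀ y ∈ A, ¬ G.Adj x y) (hB : Disjoint B G.support) :
    ∀ x ∈ A ∪ B, ∀ y ∈ A ∪ B, ¬ G.Adj x y := by
  have hA_of_adj : ∀ x y, x ∈ A ∪ B → G.Adj x y → x ∈ A := fun x y hx hxy =>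
    hx.resolve_right fun hxB => Set.disjoint_left.1 hB hxB ⟨y, hxy⟩
  exact fun x hx y hy hxy =>
    hA x (hA_of_adj x y hx hxy) y (hA_of_adj y x hy hxy.symm) hxy

namespace IsTransformer

variable {F : SimpleGraph W} {H H' T : SimpleGraph V}

lemma disjoint_left (h : IsTransformer F H H' T) : Disjoint H T := disjoint_edgeSet.1 h.1

lemma disjoint_right (h : IsTransformer F H H' T) : Disjoint H' T := disjoint_edgeSet.1 h.2.1

lemma support_subset_left (h : IsTransformer F H H' T) : H.support ⊆ T.support :=
  Set.subset_union_left.trans h.2.2.1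

lemma support_subset_right (h : IsTransformer F H H' T) : H'.support ⊆ T.support :=
  Set.subset_union_right.trans h.2.2.1

lemma not_adj_left (h : IsTransformer F H H' T) : ∀ x ∈ H.support, ∀ y ∈ H.support, ¬ T.Adj x y :=
  fun x hx y hy => h.2.2.2.1 x (Or.inl hx) y (Or.inl hy)

lemma not_adj_right (h : IsTransformer F H H' T) :
    ∀ x ∈ H'.support, ∀ y ∈ H'.support, ¬ T.Adj x y :=
  fun x hx y hy => h.2.2.2.1 x (Or.inr hx) y (Or.inr hy)

lemma hasDecomposition_left (h : IsTransformer F H H' T) : HasDecomposition F (T ⊔ H) :=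
  h.2.2.2.2.1

lemma hasDecomposition_right (h : IsTransformer F H H' T) : HasDecomposition F (T ⊔ H') :=
  h.2.2.2.2.2

end IsTransformer

theorem isTransformer_trans_general {V W : Type*} (F : SimpleGraph W)
    (H H' H'' T₁ T₂ : SimpleGraph V)
    (hd₁ : Disjoint H.support H'.support)
    (hd₂ : Disjoint H'.support H''.support)
    (h₁ : IsTransformer F H H' T₁)
    (h₂ : IsTransformer F H' H'' T₂)
    (hV : T₁.support ∩ T₂.support = H'.support) :
    IsTransformer F H H'' (T₁ ⊔ H' ⊔ T₂) := by
  have hHT₂ : Disjoint H.support T₂.support :=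
    disjoint_of_subset_of_inter_eq hd₁ h₁.support_subset_left hV
  have hH''T₁ : Disjoint H''.support T₁.support :=
    disjoint_of_subset_of_inter_eq hd₂.symm h₂.support_subset_right (Set.inter_comm _ _ ▸ hV)
  have hHH' : Disjoint H H' := disjoint_of_disjoint_support _ hd₁
  have hH''H' : Disjoint H'' H' := disjoint_of_disjoint_support _ hd₂.symm
  have hHT₂' : Disjoint H T₂ := disjoint_of_disjoint_support _ hHT₂
  have hH''T₁' : Disjoint H'' T₁ := disjoint_of_disjoint_support _ hH''T₁
  have hT₁T₂ : Disjoint T₁ T₂ := disjoint_of_support_inter_subset hV.le h₁.not_adj_right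
  refine ⟨?_, ?_, ?_, ?_, ?_, ?_⟩
  · simp only [disjoint_edgeSet, disjoint_sup_right]
    exact ⟨⟨h₁.disjoint_left, hHH'⟩, hHT₂'⟩
  · simp only [disjoint_edgeSet, disjoint_sup_right]
    exact ⟨⟨hH''T₁', hH''H'⟩, h₂.disjoint_right⟩
  · exact Set.union_subset
      (h₁.support_subset_left.trans (support_mono (le_sup_left.trans le_sup_left)))
      (h₂.support_subset_right.trans (support_mono le_sup_right))
  · rintro x hx y hy ((h | h) | h)
    · exact not_adj_union_of_disjoint_support h₁.not_adj_left hH''T₁ x hx y hy h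
    · exact not_adj_of_disjoint_support (Set.disjoint_union_left.2 ⟨hd₁, hd₂.symm⟩) x hx y hy h
    · rw [Set.union_comm] at hx hy
      exact not_adj_union_of_disjoint_support h₂.not_adj_right hHT₂ x hx y hy h
  · rw [show T₁ ⊔ H' ⊔ T₂ ⊔ H = (T₁ ⊔ H) ⊔ (T₂ ⊔ H') by ac_rfl]
    refine h₁.hasDecomposition_left.sup ?_ h₂.hasDecomposition_left
    simp only [disjoint_sup_left, disjoint_sup_right]
    exact ⟨⟨hT₁T₂, hHT₂'⟩, h₁.disjoint_right.symm, hHH'⟩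
  · rw [show T₁ ⊔ H' ⊔ T₂ ⊔ H'' = (T₂ ⊔ H'') ⊔ (T₁ ⊔ H') by ac_rfl]
    refine h₂.hasDecomposition_right.sup ?_ h₁.hasDecomposition_right
    simp only [disjoint_sup_left, disjoint_sup_right]
    exact ⟨⟨hT₁T₂.symm, hH''T₁'⟩, h₂.disjoint_left.symm, hH''H'⟩

/-- Transitivity of the transformer relation: if `H, H', H''` are pairwise
vertex-disjoint, `T₁` is an `(H, H')_F`-transformer, `T₂` is an `(H', H'')_F`-transformer
and `V(T₁) ∩ V(T₂) = V(H')`, then `T₁ ∪ H' ∪ T₂` is an `(H, H'')_F`-transformer. -/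
theorem isTransformer_trans {V W : Type*} (F : SimpleGraph W)
    (H H' H'' T₁ T₂ : SimpleGraph V)
    (hd₁ : Disjoint H.support H'.support)
    (hd₂ : Disjoint H'.support H''.support)
    (hd₃ : Disjoint H.support H''.support)
    (h₁ : IsTransformer F H H' T₁)
    (h₂ : IsTransformer F H' H'' T₂)
    (hV : T₁.support ∩ T₂.support = H'.support) :
    IsTransformer F H H'' (T₁ ⊔ H' ⊔ T₂) :=
  isTransformer_trans_general F H H' H'' T₁ T₂ hd₁ hd₂ h₁ h₂ hV

end Paper
end

section
/- Let X_1, ..., X_n be Bernoulli random variables such that for every s and every assignment of values to X_1, ..., X_{s-1}, the conditional probability that X_s = 1 is at most p. Let X = X_1 + ... + X_n and let B be binomial with parameters n, p. Then P(X ≥ a) ≤ P(B ≥ a) for every a ≥ 0. -/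
/-!
Write `S s = X 0 + ⋯ + X (s - 1)` and `T s a` for the probability that a `B(s, p)` variable is at
least `a`; we show `P(S s ≥ a) ≤ T s a` by induction on `s`. The event `S (s + 1) ≥ b + 1` lies in
`{S s ≥ b + 1} ∪ ({S s = b} ∩ {X s = 1})`, and `{S s = b}` is a disjoint union of events fixing the
values of `X 0, …, X (s - 1)`, on each of which `X s = 1` has conditional probability at most `p`.
Hence `P(S (s + 1) ≥ b + 1) ≤ (1 - p) P(S s ≥ b + 1) + p P(S s ≥ b)`, and the binomial tails obey
the same recurrence with equality (Pascal's rule).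
-/

open MeasureTheory Finset

noncomputable def binomialTail (n : ℕ) (p : ℝ) (a : ℕ) : ℝ :=
  ∑ k ∈ Icc a n, (n.choose k : ℝ) * p ^ k * (1 - p) ^ (n - k)

theorem binomialTail_zero_right (n : ℕ) (p : ℝ) : binomialTail n p 0 = 1 := by
  rw [binomialTail, ← Nat.range_succ_eq_Icc_zero]
  have h := add_pow p (1 - p) n
  rw [add_sub_cancel, one_pow] at h
  exact (sum_congr rfl fun k _ => by ring).trans h.symm

theorem binomialTail_succ_succ (n : ℕ) (p : ℝ) (b : ℕ) :
    binomialTail (n + 1) p (b + 1) =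
      (1 - p) * binomialTail n p (b + 1) + p * binomialTail n p b := by
  set f : ℕ → ℕ → ℝ := fun n k => (n.choose k : ℝ) * p ^ k * (1 - p) ^ (n - k)
  have pascal (k : ℕ) : f (n + 1) (k + 1) = (1 - p) * f n (k + 1) + p * f n k := by
    rcases lt_or_ge k n with hk | hk
    · simp only [f, Nat.choose_succ_succ', Nat.add_sub_add_right,
        show n - k = n - (k + 1) + 1 by omega]
      push_cast; ring
    · simp [f, Nat.choose_succ_succ', Nat.choose_eq_zero_of_lt (by omega : n < k + 1)]
      ring
  have shift (g : ℕ → ℝ) : ∑ k ∈ Icc (b + 1) (n + 1), g k = ∑ k ∈ Icc b n, g (k + 1) := by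
    rw [← map_add_right_Icc, sum_map]; rfl
  have top : ∑ k ∈ Icc (b + 1) (n + 1), f n k = binomialTail n p (b + 1) :=
    (sum_subset (Icc_subset_Icc_right n.le_succ) fun k hk hkn => by
      simp [f, Nat.choose_eq_zero_of_lt (by simp at hk hkn; omega : n < k)]).symm
  calc binomialTail (n + 1) p (b + 1) = ∑ k ∈ Icc b n, f (n + 1) (k + 1) := shift _
    _ = (1 - p) * ∑ k ∈ Icc b n, f n (k + 1) + p * ∑ k ∈ Icc b n, f n k := by
        simp only [pascal, sum_add_distrib, mul_sum]
    _ = _ := by rw [← shift, top]; rfl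

section
variable {Ω : Type*} {n : ℕ}

/-- The values of `X 0, …, X (s - 1)`, padded with zeros so that the fibres of `history X s` are
exactly the conditioning events `{ω | ∀ i < s, X i ω = x i}`. -/
def history (X : Fin n → Ω → ℕ) (s : ℕ) (ω : Ω) : Fin n → ℕ :=
  fun i => if (i : ℕ) < s then X i ω else 0

def partialSum (X : Fin n → Ω → ℕ) (s : ℕ) (ω : Ω) : ℕ :=
  ∑ i, history X s ω i

/-- `P(X s = 1 | X i = x i for all i < s) ≤ p`, multiplied out so that it also makes sense when the
conditioning event is null. -/
def CondSuccessProbLE [MeasurableSpace Ω] (μ : Measure Ω) (X : Fin n → Ω → ℕ) (p : ℝ) : Prop :=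
  ∀ (s : Fin n) (x : Fin n → ℕ), (∀ i, x i ≤ 1) →
    μ.real ({ω | X s ω = 1} ∩ {ω | ∀ i < s, X i ω = x i}) ≤
      p * μ.real {ω | ∀ i < s, X i ω = x i}

variable {X : Fin n → Ω → ℕ}

theorem measurable_history [MeasurableSpace Ω] (hmeas : ∀ i, Measurable (X i)) (s : ℕ) :
    Measurable (history X s) :=
  measurable_pi_lambda _ fun i => by
    by_cases hi : (i : ℕ) < s <;> simp [history, hi, hmeas i]

theorem measurable_partialSum [MeasurableSpace Ω] (hmeas : ∀ i, Measurable (X i)) (s : ℕ) :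
    Measurable (partialSum X s) :=
  Finset.measurable_sum _ fun i _ => (measurable_pi_apply i).comp (measurable_history hmeas s)

theorem history_le_one (hber : ∀ i ω, X i ω ≤ 1) (s : ℕ) (ω : Ω) (i : Fin n) :
    history X s ω i ≤ 1 := by
  unfold history; split_ifs <;> simp [hber]

theorem history_preimage_singleton_self (s : Fin n) (ω₀ : Ω) :
    history X s ⁻¹' {history X s ω₀} = {ω | ∀ i < s, X i ω = history X s ω₀ i} := by
  ext ω
  simp only [Set.mem_preimage, Set.mem_singleton_iff, funext_iff, history, Fin.lt_def]
  refine forall_congr' fun i => ?_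
  split_ifs with hi <;> simp [hi]

theorem partialSum_zero (ω : Ω) : partialSum X 0 ω = 0 := by
  simp [partialSum, history]

theorem partialSum_succ (s : Fin n) (ω : Ω) :
    partialSum X (s + 1) ω = partialSum X s ω + X s ω := by
  have hterm (i : Fin n) :
      history X (s + 1) ω i = history X s ω i + if i = s then X i ω else 0 := by
    simp only [history, Fin.ext_iff]
    split_ifs <;> omega
  simp only [partialSum, hterm, sum_add_distrib, sum_ite_eq', mem_univ, if_true]

theorem partialSum_self (ω : Ω) : partialSum X n ω = ∑ i, X i ω := by
  simp [partialSum, history]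

variable [MeasurableSpace Ω] {μ : Measure Ω} {p : ℝ}

theorem measureReal_inter_history_preimage_le [IsFiniteMeasure μ]
    (hmeas : ∀ i, Measurable (X i)) (hber : ∀ i ω, X i ω ≤ 1) (hp0 : 0 ≤ p)
    (hcond : CondSuccessProbLE μ X p) (s : Fin n) (T : Set (Fin n → ℕ)) :
    μ.real ({ω | X s ω = 1} ∩ history X s ⁻¹' T) ≤ p * μ.real (history X s ⁻¹' T) := by
  set C := {ω | X s ω = 1}
  have hC : MeasurableSet C := hmeas s (measurableSet_singleton 1)
  have hfiber_meas (x : Fin n → ℕ) : MeasurableSet (history X s ⁻¹' {x}) :=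
    measurable_history hmeas s (measurableSet_singleton x)
  have hfiber (x : Fin n → ℕ) :
      μ (C ∩ history X s ⁻¹' {x}) ≤ ENNReal.ofReal p * μ (history X s ⁻¹' {x}) := by
    rcases (history X s ⁻¹' {x}).eq_empty_or_nonempty with hempty | ⟨ω₀, rfl⟩
    · simp [hempty]
    rw [history_preimage_singleton_self, ← ofReal_measureReal, ← ofReal_measureReal,
      ← ENNReal.ofReal_mul hp0]
    exact ENNReal.ofReal_le_ofReal (hcond s _ (history_le_one hber s ω₀))
  have hsum (ν : Measure Ω) : ∑' x : T, ν (history X s ⁻¹' {↑x}) = ν (history X s ⁻¹' T) :=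
    tsum_measure_preimage_singleton T.to_countable fun x _ => hfiber_meas x
  have key : μ (C ∩ history X s ⁻¹' T) ≤ ENNReal.ofReal p * μ (history X s ⁻¹' T) :=
    calc μ (C ∩ history X s ⁻¹' T) = ∑' x : T, μ (C ∩ history X s ⁻¹' {↑x}) := by
          rw [Set.inter_comm, ← Measure.restrict_apply' hC, ← hsum]
          simp only [Measure.restrict_apply' hC, Set.inter_comm]
      _ ≤ ∑' x : T, ENNReal.ofReal p * μ (history X s ⁻¹' {↑x}) :=
          ENNReal.tsum_le_tsum fun x => hfiber x
      _ = ENNReal.ofReal p * μ (history X s ⁻¹' T) := by rw [ENNReal.tsum_mul_left, hsum]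
  simpa [measureReal_def, ENNReal.toReal_mul, hp0] using ENNReal.toReal_mono (by finiteness) key

theorem measureReal_le_partialSum_succ_le [IsFiniteMeasure μ] (hmeas : ∀ i, Measurable (X i))
    (hber : ∀ i ω, X i ω ≤ 1) (hp0 : 0 ≤ p) (hcond : CondSuccessProbLE μ X p) (s : Fin n)
    (b : ℕ) :
    μ.real {ω | b + 1 ≤ partialSum X (s + 1) ω} ≤
      (1 - p) * μ.real {ω | b + 1 ≤ partialSum X s ω} + p * μ.real {ω | b ≤ partialSum X s ω} := by
  set A := {ω | b + 1 ≤ partialSum X s ω}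
  set B := {ω | partialSum X s ω = b}
  have hcover : {ω | b + 1 ≤ partialSum X (s + 1) ω} ⊆ A ∪ ({ω | X s ω = 1} ∩ B) := by
    intro ω hω
    simp only [Set.mem_ofPred_eq, partialSum_succ] at hω
    have := hber s ω
    simp only [A, B, Set.mem_union, Set.mem_inter_iff, Set.mem_ofPred_eq]
    omega
  have hsplit : {ω | b ≤ partialSum X s ω} = A ∪ B := by
    ext ω; simp only [A, B, Set.mem_union, Set.mem_ofPred_eq]; omega
  have hdisj : Disjoint A B := Set.disjoint_left.2 fun ω hA hB => by
    simp only [A, B, Set.mem_ofPred_eq] at hA hB; omega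
  have hB : MeasurableSet B := measurable_partialSum hmeas s (measurableSet_singleton b)
  calc μ.real {ω | b + 1 ≤ partialSum X (s + 1) ω}
      ≤ μ.real A + μ.real ({ω | X s ω = 1} ∩ B) :=
        (measureReal_mono hcover).trans (measureReal_union_le _ _)
    _ ≤ μ.real A + p * μ.real B := by
        gcongr
        exact measureReal_inter_history_preimage_le hmeas hber hp0 hcond s {x | ∑ i, x i = b}
    _ = (1 - p) * μ.real A + p * μ.real {ω | b ≤ partialSum X s ω} := by
        rw [hsplit, measureReal_union hdisj hB]; ring

theorem measureReal_le_partialSum_le_binomialTail [IsProbabilityMeasure μ]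
    (hmeas : ∀ i, Measurable (X i)) (hber : ∀ i ω, X i ω ≤ 1) (hp0 : 0 ≤ p) (hp1 : p ≤ 1)
    (hcond : CondSuccessProbLE μ X p) (s : ℕ) (hs : s ≤ n) (a : ℕ) :
    μ.real {ω | a ≤ partialSum X s ω} ≤ binomialTail s p a := by
  induction s generalizing a with
  | zero =>
    rcases a with _ | b
    · exact measureReal_le_one.trans_eq (binomialTail_zero_right 0 p).symm
    · simp [partialSum_zero, binomialTail]
  | succ s ih =>
    rcases a with _ | b
    · exact measureReal_le_one.trans_eq (binomialTail_zero_right _ p).symm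
    have hq : 0 ≤ 1 - p := sub_nonneg.2 hp1
    calc μ.real {ω | b + 1 ≤ partialSum X (s + 1) ω}
        ≤ (1 - p) * μ.real {ω | b + 1 ≤ partialSum X s ω} +
            p * μ.real {ω | b ≤ partialSum X s ω} :=
          measureReal_le_partialSum_succ_le hmeas hber hp0 hcond ⟨s, hs⟩ b
      _ ≤ (1 - p) * binomialTail s p (b + 1) + p * binomialTail s p b := by
          gcongr <;> exact ih (by omega) _
      _ = binomialTail (s + 1) p (b + 1) := (binomialTail_succ_succ s p b).symm

end

/-- (Jain's lemma.) Let `X 0, …, X (n-1)` be Bernoulli random variables such that,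
conditionally on any assignment of values to the earlier variables, the probability
that `X s = 1` is at most `p`. Then for every `a`, the probability that
`X 0 + ⋯ + X (n-1) ≥ a` is at most the probability that a binomial random variable
with parameters `n, p` is at least `a`. -/
theorem bernoulli_dominated_by_binomial
    {Ω : Type*} [MeasurableSpace Ω] (μ : Measure Ω) [IsProbabilityMeasure μ]
    (n : ℕ) (X : Fin n → Ω → ℕ)
    (hmeas : ∀ i, Measurable (X i))
    (hber : ∀ i ω, X i ω ≤ 1)
    (p : ℝ) (hp0 : 0 ≤ p) (hp1 : p ≤ 1)
    (hcond : ∀ (s : Fin n) (x : Fin n → ℕ), (∀ i, x i ≤ 1) →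
      (μ ({ω | X s ω = 1} ∩ {ω | ∀ i < s, X i ω = x i})).toReal ≤
        p * (μ {ω | ∀ i < s, X i ω = x i}).toReal)
    (a : ℕ) :
    (μ {ω | a ≤ ∑ i, X i ω}).toReal ≤
      ∑ k ∈ Finset.Icc a n, (n.choose k : ℝ) * p ^ k * (1 - p) ^ (n - k) := by
  have h := measureReal_le_partialSum_le_binomialTail hmeas hber hp0 hp1 hcond n le_rfl a
  simp only [partialSum_self] at h
  exact h
end

section
/- Let ℓ ≥ 3 be odd, n odd and divisible by ℓ, and let G be the blow-up of K_{ℓ-1,ℓ-1} by cliques K_n. Every copy of C_ℓ in G contains at least one edge inside one of the blow-up cliques, and the total number of such internal edges is 2(ℓ-1)·binom(n,2) < e(G)/ℓ; hence G has no C_ℓ-decomposition. -/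
/-!
Colour each vertex of the blow-up by its side. An odd cycle has no proper 2-colouring, so
every copy of `C_ℓ` has an edge inside one side, that is, inside one of the blow-up cliques.
In a `C_ℓ`-decomposition these edges are distinct for distinct copies, so there are at most
`2(ℓ-1)·binom(n,2)` copies, and they cover at most `ℓ` times as many edges. The blow-up is
regular of degree `(ℓ-1)n + n - 1`, and counting its edges shows that this is too few.
-/

open SimpleGraph

namespace Paper

variable {V W : Type*}

/-- The blow-up of `K_{ℓ-1,ℓ-1}` by cliques `K_n`: vertices `(side, clique index, inner)`;
two distinct vertices are adjacent iff they are on opposite sides (complete bipartite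
part) or in the same clique on the same side. -/
def bipartiteBlowup (ℓ n : ℕ) : SimpleGraph (Fin 2 × Fin (ℓ - 1) × Fin n) where
  Adj x y := x ≠ y ∧ (x.1 ≠ y.1 ∨ x.2.1 = y.2.1)
  symm := ⟨by
    rintro x y ⟨h1, h2⟩
    refine ⟨h1.symm, ?_⟩
    rcases h2 with h | h
    · exact Or.inl fun hh => h hh.symm
    · exact Or.inr h.symm⟩
  loopless := ⟨by rintro x ⟨h, -⟩; exact h rfl⟩

/-- An edge of the blow-up of `K_{ℓ-1,ℓ-1}` is internal if both endpoints lie on the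
same side (equivalently, inside one of the blow-up cliques). -/
def SameSideEdge (ℓ n : ℕ) (e : Sym2 (Fin 2 × Fin (ℓ - 1) × Fin n)) : Prop :=
  ∃ x y : Fin 2 × Fin (ℓ - 1) × Fin n, e = s(x, y) ∧ x.1 = y.1

section Decomposition

variable {F : SimpleGraph W} {G : SimpleGraph V}

lemma edgeSet_copyAt (F : SimpleGraph W) (φ : W ↪ V) :
    (copyAt F φ).edgeSet = Sym2.map φ '' F.edgeSet := by
  ext e
  induction e using Sym2.ind with
  | _ x y =>
    constructor
    · rintro ⟨a, b, hab, rfl, rfl⟩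
      exact ⟨s(a, b), hab, rfl⟩
    · rintro ⟨e, he, hxy⟩
      induction e using Sym2.ind with
      | _ a b =>
        rcases Sym2.eq_iff.mp hxy with ⟨rfl, rfl⟩ | ⟨rfl, rfl⟩
        · exact ⟨a, b, he, rfl, rfl⟩
        · exact ⟨b, a, he.symm, rfl, rfl⟩

lemma ecard_copyAt (F : SimpleGraph W) (φ : W ↪ V) : ecard (copyAt F φ) = ecard F := by
  rw [ecard, ecard, edgeSet_copyAt, Nat.card_image_of_injective (Sym2.map.injective φ.injective)]

lemma IsDecompositionOn.ecard_le [Finite V] {s : Set (W ↪ V)} (h : IsDecompositionOn F G s) :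
    ecard G ≤ s.ncard * ecard F := by
  have hs : s.Finite := Set.toFinite s
  have hcover : G.edgeSet ⊆ ⋃ φ ∈ hs.toFinset, (copyAt F φ).edgeSet := fun e he => by
    obtain ⟨φ, hφ, heφ⟩ := h.2.1 e he
    exact Set.mem_biUnion (hs.mem_toFinset.mpr hφ) heφ
  calc ecard G = G.edgeSet.ncard := Nat.card_coe_set_eq _
    _ ≤ (⋃ φ ∈ hs.toFinset, (copyAt F φ).edgeSet).ncard := Set.ncard_le_ncard hcover
    _ ≤ ∑ φ ∈ hs.toFinset, (copyAt F φ).edgeSet.ncard := hs.toFinset.set_ncard_biUnion_le _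
    _ = ∑ φ ∈ hs.toFinset, ecard F :=
      Finset.sum_congr rfl fun φ _ => by rw [← ecard_copyAt F φ, ecard, Nat.card_coe_set_eq]
    _ = s.ncard * ecard F := by
      rw [Finset.sum_const, smul_eq_mul, Set.ncard_eq_toFinset_card s hs]

lemma IsDecompositionOn.ncard_le [Finite V] {s : Set (W ↪ V)} (h : IsDecompositionOn F G s)
    (D : Set (Sym2 V)) (hD : ∀ φ, copyAt F φ ≤ G → ∃ e ∈ (copyAt F φ).edgeSet, e ∈ D) :
    s.ncard ≤ D.ncard := by
  choose f hf hfD using fun φ : s => hD φ (h.1 φ φ.2)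
  rw [← Nat.card_coe_set_eq, ← Nat.card_coe_set_eq]
  refine Nat.card_le_card_of_injective (fun φ => ⟨f φ, hfD φ⟩) fun φ ψ hfφψ => ?_
  have hfeq : f φ = f ψ := congrArg Subtype.val hfφψ
  by_contra hne
  exact Set.disjoint_left.mp (h.2.2 φ.2 ψ.2 (Subtype.coe_ne_coe.mpr hne)) (hf φ) (hfeq ▸ hf ψ)

lemma not_hasDecomposition_of_ncard_lt [Finite V] (D : Set (Sym2 V))
    (hD : ∀ φ, copyAt F φ ≤ G → ∃ e ∈ (copyAt F φ).edgeSet, e ∈ D)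
    (hlt : D.ncard < ecard G / ecard F) : ¬ HasDecomposition F G := by
  rintro ⟨s, hs⟩
  have hF : 0 < ecard F := Nat.pos_of_ne_zero fun h0 => by simp [h0] at hlt
  have hG_ge : (D.ncard + 1) * ecard F ≤ ecard G := (Nat.le_div_iff_mul_le hF).mp hlt
  have hG_le : ecard G ≤ D.ncard * ecard F :=
    hs.ecard_le.trans (Nat.mul_le_mul_right _ (hs.ncard_le D hD))
  rw [add_one_mul] at hG_ge
  omega

end Decomposition

lemma exists_adj_copyAt_eq_of_not_colorable {F : SimpleGraph W} (hF : ¬ F.Colorable 2)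
    (φ : W ↪ V) (c : V → Fin 2) : ∃ x y, (copyAt F φ).Adj x y ∧ c x = c y := by
  by_contra! h
  exact hF ⟨Coloring.mk (c ∘ φ) fun hab => h _ _ ⟨_, _, hab, rfl, rfl⟩⟩

lemma cycleGraph_not_colorable_two {k : ℕ} (hk : 2 ≤ k) (hodd : Odd k) :
    ¬ (cycleGraph k).Colorable 2 := fun h => by
  have := h.chromaticNumber_le
  rw [chromaticNumber_cycleGraph_of_odd k hk hodd] at this
  exact absurd this (by decide)

lemma _root_.SimpleGraph.IsRegularOfDegree.two_mul_ecard {G : SimpleGraph V} [Fintype V]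
    [DecidableRel G.Adj] {d : ℕ} (h : G.IsRegularOfDegree d) :
    2 * ecard G = Fintype.card V * d := by
  rw [ecard, Nat.card_eq_fintype_card, card_edgeSet, ← sum_degrees_eq_twice_card_edges]
  simp [h.degree_eq]

lemma two_mul_choose_two (n : ℕ) : 2 * n.choose 2 = n * (n - 1) := by
  rw [Nat.choose_two_right, Nat.mul_div_cancel' (Nat.even_mul_pred_self n).two_dvd]

def blowupCliques (ℓ n : ℕ) : SimpleGraph (Fin 2 × Fin (ℓ - 1) × Fin n) where
  Adj x y := x ≠ y ∧ x.1 = y.1 ∧ x.2.1 = y.2.1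
  symm := ⟨fun _ _ ⟨hne, h₁, h₂⟩ => ⟨hne.symm, h₁.symm, h₂.symm⟩⟩
  loopless := ⟨fun _ h => h.1 rfl⟩

section Blowup

variable (ℓ n : ℕ)

instance : DecidableRel (bipartiteBlowup ℓ n).Adj :=
  fun _ _ => inferInstanceAs (Decidable (_ ∧ _))

instance : DecidableRel (blowupCliques ℓ n).Adj :=
  fun _ _ => inferInstanceAs (Decidable (_ ∧ _))

@[simp]
lemma bipartiteBlowup_adj {x y : Fin 2 × Fin (ℓ - 1) × Fin n} :
    (bipartiteBlowup ℓ n).Adj x y ↔ x ≠ y ∧ (x.1 ≠ y.1 ∨ x.2.1 = y.2.1) := Iff.rfl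

@[simp]
lemma blowupCliques_adj {x y : Fin 2 × Fin (ℓ - 1) × Fin n} :
    (blowupCliques ℓ n).Adj x y ↔ x ≠ y ∧ x.1 = y.1 ∧ x.2.1 = y.2.1 := Iff.rfl

lemma blowupCliques_neighborFinset (x : Fin 2 × Fin (ℓ - 1) × Fin n) :
    (blowupCliques ℓ n).neighborFinset x = {x.1} ×ˢ {x.2.1} ×ˢ Finset.univ.erase x.2.2 := by
  obtain ⟨a, i, j⟩ := x
  ext ⟨b, k, m⟩
  simp only [mem_neighborFinset, blowupCliques_adj, Finset.mem_product, Finset.mem_singleton,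
    Finset.mem_erase, Finset.mem_univ, ne_eq, Prod.mk.injEq]
  tauto

lemma bipartiteBlowup_neighborFinset (x : Fin 2 × Fin (ℓ - 1) × Fin n) :
    (bipartiteBlowup ℓ n).neighborFinset x =
      Finset.univ.erase x.1 ×ˢ Finset.univ ∪ (blowupCliques ℓ n).neighborFinset x := by
  obtain ⟨a, i, j⟩ := x
  ext ⟨b, k, m⟩
  simp only [mem_neighborFinset, bipartiteBlowup_adj, blowupCliques_adj, Finset.mem_union,
    Finset.mem_product, Finset.mem_erase, Finset.mem_univ, ne_eq, Prod.mk.injEq]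
  tauto

lemma blowupCliques_isRegularOfDegree : (blowupCliques ℓ n).IsRegularOfDegree (n - 1) :=
  fun x => by simp [← card_neighborFinset_eq_degree, blowupCliques_neighborFinset]

lemma bipartiteBlowup_isRegularOfDegree :
    (bipartiteBlowup ℓ n).IsRegularOfDegree ((ℓ - 1) * n + (n - 1)) := fun x => by
  rw [← card_neighborFinset_eq_degree, bipartiteBlowup_neighborFinset,
    Finset.card_union_of_disjoint, card_neighborFinset_eq_degree,
    blowupCliques_isRegularOfDegree ℓ n x]
  · simp
  · rw [blowupCliques_neighborFinset, Finset.disjoint_product]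
    exact Or.inl (Finset.disjoint_singleton_right.mpr (Finset.notMem_erase _ _))

lemma ecard_bipartiteBlowup :
    ecard (bipartiteBlowup ℓ n) = (ℓ - 1) * n * ((ℓ - 1) * n + (n - 1)) := by
  have h := (bipartiteBlowup_isRegularOfDegree ℓ n).two_mul_ecard
  rw [Fintype.card_prod, Fintype.card_prod, Fintype.card_fin, Fintype.card_fin, Fintype.card_fin,
    mul_assoc] at h
  exact Nat.eq_of_mul_eq_mul_left two_pos h

lemma ecard_blowupCliques : ecard (blowupCliques ℓ n) = 2 * (ℓ - 1) * n.choose 2 := by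
  have h := (blowupCliques_isRegularOfDegree ℓ n).two_mul_ecard
  rw [Fintype.card_prod, Fintype.card_prod, Fintype.card_fin, Fintype.card_fin, Fintype.card_fin,
    mul_assoc] at h
  refine Nat.eq_of_mul_eq_mul_left two_pos (h.trans ?_)
  rw [mul_right_comm 2 (ℓ - 1), two_mul_choose_two]
  ring

lemma sameSideEdge_mk_iff {x y : Fin 2 × Fin (ℓ - 1) × Fin n} :
    SameSideEdge ℓ n s(x, y) ↔ x.1 = y.1 := by
  refine ⟨fun ⟨u, v, huv, h⟩ => ?_, fun h => ⟨x, y, rfl, h⟩⟩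
  rcases Sym2.eq_iff.mp huv with ⟨rfl, rfl⟩ | ⟨rfl, rfl⟩
  exacts [h, h.symm]

lemma setOf_sameSideEdge_eq_edgeSet_blowupCliques :
    {e | e ∈ (bipartiteBlowup ℓ n).edgeSet ∧ SameSideEdge ℓ n e} =
      (blowupCliques ℓ n).edgeSet := by
  ext e
  induction e using Sym2.ind with
  | _ x y =>
    simp only [Set.mem_ofPred_eq, mem_edgeSet, sameSideEdge_mk_iff, bipartiteBlowup_adj,
      blowupCliques_adj]
    tauto

lemma exists_sameSideEdge_mem_copyAt_cycleGraph {k : ℕ} (hk : 2 ≤ k) (hodd : Odd k)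
    (φ : Fin k ↪ Fin 2 × Fin (ℓ - 1) × Fin n) :
    ∃ e ∈ (copyAt (cycleGraph k) φ).edgeSet, SameSideEdge ℓ n e := by
  obtain ⟨x, y, hxy, hside⟩ :=
    exists_adj_copyAt_eq_of_not_colorable (cycleGraph_not_colorable_two hk hodd) φ Prod.fst
  exact ⟨s(x, y), hxy, (sameSideEdge_mk_iff ℓ n).mpr hside⟩

end Blowup

lemma ecard_cycleGraph {k : ℕ} (hk : 3 ≤ k) : ecard (cycleGraph k) = k := by
  obtain ⟨j, rfl⟩ : ∃ j, k = j + 3 := ⟨k - 3, by omega⟩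
  have h := IsRegularOfDegree.two_mul_ecard (G := cycleGraph (j + 3)) (d := 2)
    fun _ => cycleGraph_degree_three_le
  rw [Fintype.card_fin] at h
  omega

lemma two_mul_mul_choose_two_lt {ℓ n : ℕ} (hℓ : 3 ≤ ℓ) (hn : 1 ≤ n) :
    2 * (ℓ - 1) * n.choose 2 < (ℓ - 1) * n * ((ℓ - 1) * n + (n - 1)) / ℓ := by
  rw [mul_right_comm, two_mul_choose_two, Nat.lt_iff_add_one_le, Nat.le_div_iff_mul_le (by omega)]
  obtain ⟨k, rfl⟩ : ∃ k, ℓ = k + 1 := ⟨ℓ - 1, by omega⟩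
  obtain ⟨m, rfl⟩ : ∃ m, n = m + 1 := ⟨n - 1, by omega⟩
  simp only [Nat.add_sub_cancel]
  have hk : 2 ≤ k := by omega
  nlinarith [Nat.mul_le_mul hk (le_refl (k * (m + 1))), Nat.zero_le (k * m)]

theorem bipartiteBlowup_not_decomposable_general (ℓ n : ℕ) (hℓ : 3 ≤ ℓ) (hℓo : Odd ℓ)
    (hno : Odd n) :
    (∀ φ : Fin ℓ ↪ Fin 2 × Fin (ℓ - 1) × Fin n,
      copyAt (cycleGraph ℓ) φ ≤ bipartiteBlowup ℓ n →
      ∃ e ∈ (copyAt (cycleGraph ℓ) φ).edgeSet, SameSideEdge ℓ n e) ∧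
    Nat.card ↥{e | e ∈ (bipartiteBlowup ℓ n).edgeSet ∧ SameSideEdge ℓ n e} =
      2 * (ℓ - 1) * n.choose 2 ∧
    2 * (ℓ - 1) * n.choose 2 < ecard (bipartiteBlowup ℓ n) / ℓ ∧
    ¬ HasDecomposition (cycleGraph ℓ) (bipartiteBlowup ℓ n) := by
  have hcard : Nat.card ↥{e | e ∈ (bipartiteBlowup ℓ n).edgeSet ∧ SameSideEdge ℓ n e} =
      2 * (ℓ - 1) * n.choose 2 := by
    rw [setOf_sameSideEdge_eq_edgeSet_blowupCliques]
    exact ecard_blowupCliques ℓ n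
  have hlt : 2 * (ℓ - 1) * n.choose 2 < ecard (bipartiteBlowup ℓ n) / ℓ := by
    rw [ecard_bipartiteBlowup]
    exact two_mul_mul_choose_two_lt hℓ hno.pos
  have hmeets (φ : Fin ℓ ↪ Fin 2 × Fin (ℓ - 1) × Fin n)
      (hφ : copyAt (cycleGraph ℓ) φ ≤ bipartiteBlowup ℓ n) :
      ∃ e ∈ (copyAt (cycleGraph ℓ) φ).edgeSet,
        e ∈ {e | e ∈ (bipartiteBlowup ℓ n).edgeSet ∧ SameSideEdge ℓ n e} := by
    obtain ⟨e, he, hside⟩ := exists_sameSideEdge_mem_copyAt_cycleGraph ℓ n (by omega) hℓo φ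
    exact ⟨e, he, edgeSet_mono hφ he, hside⟩
  refine ⟨fun φ hφ => (hmeets φ hφ).imp fun _ ⟨he, hD⟩ => ⟨he, hD.2⟩, hcard, hlt,
    not_hasDecomposition_of_ncard_lt _ hmeets ?_⟩
  rwa [ecard_cycleGraph hℓ, ← Nat.card_coe_set_eq, hcard]

/-- For `ℓ ≥ 3` odd and `n` odd and divisible by `ℓ`: every copy of `C_ℓ` in the
blow-up `G` of `K_{ℓ-1,ℓ-1}` by cliques `K_n` contains an internal edge; the number of
internal edges is `2(ℓ-1)·binom(n,2)`, which is less than `e(G)/ℓ`; hence `G` has no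
`C_ℓ`-decomposition. -/
theorem bipartiteBlowup_not_decomposable (ℓ n : ℕ) (hℓ : 3 ≤ ℓ) (hℓo : Odd ℓ)
    (hno : Odd n) (hℓn : ℓ ∣ n) :
    (∀ φ : Fin ℓ ↪ Fin 2 × Fin (ℓ - 1) × Fin n,
      copyAt (cycleGraph ℓ) φ ≤ bipartiteBlowup ℓ n →
      ∃ e ∈ (copyAt (cycleGraph ℓ) φ).edgeSet, SameSideEdge ℓ n e) ∧
    Nat.card ↥{e | e ∈ (bipartiteBlowup ℓ n).edgeSet ∧ SameSideEdge ℓ n e} =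
      2 * (ℓ - 1) * n.choose 2 ∧
    2 * (ℓ - 1) * n.choose 2 < ecard (bipartiteBlowup ℓ n) / ℓ ∧
    ¬ HasDecomposition (cycleGraph ℓ) (bipartiteBlowup ℓ n) :=
  bipartiteBlowup_not_decomposable_general ℓ n hℓ hℓo hno

end Paper
end

section
/- In the graph G of the previous statement, for every copy F of K_{r,r} in G the number of edges of F lying inside V_1 is divisible by r; but e(G[V_1]) = (r²m + r/2)(2r²m + r - 1) is not divisible by r, so G has no K_{r,r}-decomposition. -/
/-!
In a copy of `K_{r,r}` inside `G`, if each side had a vertex in `V₁` and a vertex outside it,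
the two outside vertices, being adjacent to `V₁`, would lie in the independent set `V₂`, yet
they are adjacent to each other. So some side lies inside `V₁` or misses it, and the copy has
`r · k` or `0` edges inside `V₁`. A decomposition would then make `r` divide the number
`n(2n - 1)` of edges of the clique on `V₁`, where `n = r²m + r/2`; as `r ∣ 2n` this forces
`r ∣ n`, i.e. `r ∣ r/2`.
-/

open SimpleGraph

namespace Paper

variable {V W : Type*}

/-- Which of the three parts a vertex of `Fin a ⊕ Fin b ⊕ Fin c` lies in. -/
def tripIdx {a b c : ℕ} : Fin a ⊕ Fin b ⊕ Fin c → ℕ :=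
  Sum.elim (fun _ => 0) (Sum.elim (fun _ => 1) (fun _ => 2))

/-- The graph with parts `V₁, V₂, V₃` of sizes `a, b, c`, consisting of a clique on
`V₁`, a clique on `V₃`, and a complete bipartite graph between `V₁ ∪ V₃` and `V₂`. -/
def tripartite (a b c : ℕ) : SimpleGraph (Fin a ⊕ Fin b ⊕ Fin c) where
  Adj x y := x ≠ y ∧
    ((tripIdx x = tripIdx y ∧ tripIdx x ≠ 1) ∨
     (tripIdx x = 1 ∧ tripIdx y ≠ 1) ∨ (tripIdx y = 1 ∧ tripIdx x ≠ 1))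
  symm := ⟨by
    rintro x y ⟨hne, hc⟩
    refine ⟨hne.symm, ?_⟩
    rcases hc with ⟨h1, h2⟩ | ⟨h1, h2⟩ | ⟨h1, h2⟩
    · exact Or.inl ⟨h1.symm, fun hh => h2 (h1.trans hh)⟩
    · exact Or.inr (Or.inr ⟨h1, h2⟩)
    · exact Or.inr (Or.inl ⟨h1, h2⟩)⟩
  loopless := ⟨by rintro x ⟨h, -⟩; exact h rfl⟩

/-- An edge lies inside `V₁` if both endpoints are in the first part. -/
def InsideV1 {a b c : ℕ} (e : Sym2 (Fin a ⊕ Fin b ⊕ Fin c)) : Prop :=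
  ∀ x ∈ e, ∃ i : Fin a, x = Sum.inl i

theorem IsDecompositionOn.dvd_card_edges [Finite V] {F : SimpleGraph W} {G : SimpleGraph V}
    {s : Set (W ↪ V)} (hs : IsDecompositionOn F G s) (P : Sym2 V → Prop) {d : ℕ}
    (hd : ∀ φ ∈ s, d ∣ Nat.card {e | e ∈ (copyAt F φ).edgeSet ∧ P e}) :
    d ∣ Nat.card {e | e ∈ G.edgeSet ∧ P e} := by
  obtain ⟨hle, hcover, hdisj⟩ := hs
  have := Fintype.ofFinite s
  -- Every edge of `G` lies in exactly one copy, so pairs (copy, edge of that copy) biject onto `G`.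
  let f : (Σ φ : s, {e | e ∈ (copyAt F φ).edgeSet ∧ P e}) → {e | e ∈ G.edgeSet ∧ P e} :=
    fun x => ⟨x.2, edgeSet_mono (hle _ x.1.2) x.2.2.1, x.2.2.2⟩
  have hf : f.Bijective := by
    constructor
    · rintro ⟨φ, e, he⟩ ⟨ψ, e', he'⟩ h
      obtain rfl : e = e' := congrArg Subtype.val h
      obtain rfl : φ = ψ := by
        by_contra hne
        exact Set.disjoint_left.mp (hdisj φ.2 ψ.2 (Subtype.coe_ne_coe.mpr hne)) he.1 he'.1
      rfl
    · rintro ⟨e, he, hP⟩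
      obtain ⟨φ, hφ, heφ⟩ := hcover e he
      exact ⟨⟨⟨φ, hφ⟩, e, heφ, hP⟩, rfl⟩
  rw [← Nat.card_eq_of_bijective f hf, Nat.card_sigma]
  exact Finset.dvd_sum fun φ _ => hd φ φ.2

theorem card_map_edges_forall_mem {F : SimpleGraph W} (φ : W ↪ V) (p : V → Prop) :
    Nat.card {e | e ∈ (F.map φ).edgeSet ∧ ∀ x ∈ e, p x} =
      Nat.card {e | e ∈ F.edgeSet ∧ ∀ x ∈ e, p (φ x)} := by
  have hset : {e | e ∈ (F.map φ).edgeSet ∧ ∀ x ∈ e, p x} =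
      Sym2.map φ '' {e | e ∈ F.edgeSet ∧ ∀ x ∈ e, p (φ x)} := by
    ext e
    simp only [edgeSet_map, Set.mem_ofPred_eq, Set.mem_image]
    constructor
    · rintro ⟨⟨e, he, rfl⟩, hp⟩
      exact ⟨e, ⟨he, fun y hy => hp _ (Sym2.mem_map.mpr ⟨y, hy, rfl⟩)⟩, rfl⟩
    · rintro ⟨e, ⟨he, hp⟩, rfl⟩
      refine ⟨⟨e, he, rfl⟩, fun x hx => ?_⟩
      obtain ⟨y, hy, rfl⟩ := Sym2.mem_map.mp hx
      exact hp y hy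
  rw [hset, Nat.card_image_of_injective (Sym2.map.injective φ.injective)]

theorem card_completeBipartiteGraph_edges_forall_mem {α β : Type*} (p : α ⊕ β → Prop) :
    Nat.card {e | e ∈ (completeBipartiteGraph α β).edgeSet ∧ ∀ x ∈ e, p x} =
      Nat.card {a // p (.inl a)} * Nat.card {b // p (.inr b)} := by
  rw [← Nat.card_prod]
  refine (Nat.card_eq_of_bijective
    (fun ab => ⟨s(.inl ab.1.1, .inr ab.2.1), by simp, by simpa using ⟨ab.1.2, ab.2.2⟩⟩) ⟨?_, ?_⟩).symm
  · rintro ⟨⟨a, ha⟩, ⟨b, hb⟩⟩ ⟨⟨a', ha'⟩, ⟨b', hb'⟩⟩ h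
    simpa using h
  · rintro ⟨e, he, hp⟩
    induction e using Sym2.ind with
    | _ x y =>
      rcases x with a | b <;> rcases y with a' | b' <;> simp at he
      · exact ⟨⟨⟨a, hp _ (by simp)⟩, ⟨b', hp _ (by simp)⟩⟩, rfl⟩
      · exact ⟨⟨⟨a', hp _ (by simp)⟩, ⟨b, hp _ (by simp)⟩⟩, Subtype.ext Sym2.eq_swap⟩

theorem Nat.choose_two_two_mul (n : ℕ) : (2 * n).choose 2 = n * (2 * n - 1) := by
  rw [Nat.choose_two_right, Nat.mul_assoc, Nat.mul_div_cancel_left _ two_pos]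

theorem Nat.not_dvd_mul_sub_one {r n x : ℕ} (hx : r ∣ x) (hx0 : 0 < x) (hn : ¬ r ∣ n) :
    ¬ r ∣ n * (x - 1) := by
  intro h
  have hnx : n * x = n * (x - 1) + n := by
    rw [← Nat.mul_add_one, Nat.sub_add_cancel hx0]
  exact hn ((Nat.dvd_add_right h).mp (hnx ▸ dvd_mul_of_dvd_right hx n))

section Tripartite

variable {a b c : ℕ}

def firstPart (a b c : ℕ) : Set (Fin a ⊕ Fin b ⊕ Fin c) := {x | ∃ i, x = .inl i}

theorem exists_eq_inr_inl_of_tripartite_adj {v : Fin a} {y : Fin a ⊕ Fin b ⊕ Fin c}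
    (h : (tripartite a b c).Adj (.inl v) y) (hy : y ∉ firstPart a b c) :
    ∃ w, y = .inr (.inl w) := by
  rcases y with w | w | w
  · exact absurd ⟨w, rfl⟩ hy
  · exact ⟨w, rfl⟩
  · simp [tripartite, tripIdx] at h

theorem tripartite_not_adj_inr_inl (v w : Fin b) :
    ¬ (tripartite a b c).Adj (.inr (.inl v)) (.inr (.inl w)) := by
  simp [tripartite, tripIdx]

theorem forall_mem_or_forall_not_mem_firstPart_of_copyAt_le {α β : Type*}
    {φ : α ⊕ β ↪ Fin a ⊕ Fin b ⊕ Fin c}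
    (hφ : copyAt (completeBipartiteGraph α β) φ ≤ tripartite a b c) :
    (∀ i, φ (.inl i) ∈ firstPart a b c) ∨ (∀ j, φ (.inr j) ∈ firstPart a b c) ∨
      (∀ i, φ (.inl i) ∉ firstPart a b c) ∨ (∀ j, φ (.inr j) ∉ firstPart a b c) := by
  have hadj : ∀ i j, (tripartite a b c).Adj (φ (.inl i)) (φ (.inr j)) := fun i j =>
    hφ ⟨.inl i, .inr j, by simp, rfl, rfl⟩
  by_contra! h
  obtain ⟨⟨i₁, hi₁⟩, ⟨j₁, hj₁⟩, ⟨i₀, v, hi₀⟩, ⟨j₀, w, hj₀⟩⟩ := h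
  obtain ⟨v₁, hv₁⟩ := exists_eq_inr_inl_of_tripartite_adj (hi₀ ▸ hadj i₀ j₁) hj₁
  obtain ⟨w₁, hw₁⟩ := exists_eq_inr_inl_of_tripartite_adj (hj₀ ▸ (hadj i₁ j₀).symm) hi₁
  exact tripartite_not_adj_inr_inl w₁ v₁ (hv₁ ▸ hw₁ ▸ hadj i₁ j₁)

theorem dvd_card_mul_card_of_forall_or_forall_not {r : ℕ} {p q : Fin r → Prop}
    (h : (∀ i, p i) ∨ (∀ j, q j) ∨ (∀ i, ¬ p i) ∨ (∀ j, ¬ q j)) :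
    r ∣ Nat.card {i // p i} * Nat.card {j // q j} := by
  rcases h with h | h | h | h <;> simp [h]

theorem insideV1_iff_forall_mem_firstPart {e : Sym2 (Fin a ⊕ Fin b ⊕ Fin c)} :
    InsideV1 e ↔ ∀ x ∈ e, x ∈ firstPart a b c :=
  Iff.rfl

theorem dvd_card_copyAt_edges_insideV1 {r : ℕ} (φ : Fin r ⊕ Fin r ↪ Fin a ⊕ Fin b ⊕ Fin c)
    (hφ : copyAt (completeBipartiteGraph (Fin r) (Fin r)) φ ≤ tripartite a b c) :
    r ∣ Nat.card {e | e ∈ (copyAt (completeBipartiteGraph (Fin r) (Fin r)) φ).edgeSet ∧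
      InsideV1 e} := by
  simp only [insideV1_iff_forall_mem_firstPart, copyAt_eq_map]
  rw [card_map_edges_forall_mem, card_completeBipartiteGraph_edges_forall_mem]
  exact dvd_card_mul_card_of_forall_or_forall_not
    (forall_mem_or_forall_not_mem_firstPart_of_copyAt_le hφ)

theorem card_tripartite_edges_insideV1 :
    Nat.card {e | e ∈ (tripartite a b c).edgeSet ∧ InsideV1 e} = a.choose 2 := by
  have hset : {e | e ∈ (tripartite a b c).edgeSet ∧ InsideV1 e} =
      Sym2.map .inl '' (⊤ : SimpleGraph (Fin a)).edgeSet := by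
    ext e
    constructor
    · rintro ⟨he, hin⟩
      induction e using Sym2.ind with
      | _ x y =>
        obtain ⟨i, rfl⟩ := hin x (by simp)
        obtain ⟨j, rfl⟩ := hin y (by simp)
        exact ⟨s(i, j), by simpa using he.1, rfl⟩
    · rintro ⟨e, he, rfl⟩
      induction e using Sym2.ind with
      | _ i j => exact ⟨by simpa [tripartite, tripIdx] using he, by simp [InsideV1]⟩
  rw [hset, Nat.card_image_of_injective (Sym2.map.injective Sum.inl_injective),
    Nat.card_eq_fintype_card, ← edgeFinset_card, card_edgeFinset_top_eq_card_choose_two,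
    Fintype.card_fin]

end Tripartite

theorem tripartite_Krr_not_decomposable_general (r m : ℕ) (hr : 2 ≤ r) (hre : Even r) :
    (∀ φ : Fin r ⊕ Fin r ↪
        Fin (2 * r ^ 2 * m + r) ⊕ Fin (2 * r ^ 2 * m + 1) ⊕ Fin (2 * r ^ 2 * m - r),
      copyAt (completeBipartiteGraph (Fin r) (Fin r)) φ ≤
        tripartite (2 * r ^ 2 * m + r) (2 * r ^ 2 * m + 1) (2 * r ^ 2 * m - r) →
      r ∣ Nat.card
        ↥{e | e ∈ (copyAt (completeBipartiteGraph (Fin r) (Fin r)) φ).edgeSet ∧ InsideV1 e}) ∧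
    Nat.card ↥{e | e ∈ (tripartite (2 * r ^ 2 * m + r) (2 * r ^ 2 * m + 1)
        (2 * r ^ 2 * m - r)).edgeSet ∧ InsideV1 e} =
      (r ^ 2 * m + r / 2) * (2 * r ^ 2 * m + r - 1) ∧
    ¬ r ∣ (r ^ 2 * m + r / 2) * (2 * r ^ 2 * m + r - 1) ∧
    ¬ HasDecomposition (completeBipartiteGraph (Fin r) (Fin r))
        (tripartite (2 * r ^ 2 * m + r) (2 * r ^ 2 * m + 1) (2 * r ^ 2 * m - r)) := by
  have hsize : 2 * r ^ 2 * m + r = 2 * (r ^ 2 * m + r / 2) := by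
    rw [mul_add, Nat.two_mul_div_two_of_even hre, mul_assoc]
  have hcount : Nat.card {e | e ∈ (tripartite (2 * r ^ 2 * m + r) (2 * r ^ 2 * m + 1)
      (2 * r ^ 2 * m - r)).edgeSet ∧ InsideV1 e} =
      (r ^ 2 * m + r / 2) * (2 * r ^ 2 * m + r - 1) := by
    rw [card_tripartite_edges_insideV1, hsize, Nat.choose_two_two_mul]
  have hndvd : ¬ r ∣ (r ^ 2 * m + r / 2) * (2 * r ^ 2 * m + r - 1) := by
    refine Nat.not_dvd_mul_sub_one (Dvd.intro (2 * r * m + 1) (by ring)) (by omega) ?_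
    rw [sq, mul_assoc, Nat.dvd_add_right (dvd_mul_right r _)]
    exact Nat.not_dvd_of_pos_of_lt (by omega) (by omega)
  refine ⟨dvd_card_copyAt_edges_insideV1, hcount, hndvd, ?_⟩
  rintro ⟨s, hs⟩
  exact hndvd (hcount ▸ hs.dvd_card_edges InsideV1 fun φ hφ =>
    dvd_card_copyAt_edges_insideV1 φ (hs.1 φ hφ))

/-- In the graph `G` of the previous statement (with `r ≥ 2` even, `m ≥ 1`), every copy
of `K_{r,r}` has a number of edges inside `V₁` divisible by `r`; but
`e(G[V₁]) = (r²m + r/2)(2r²m + r - 1)` is not divisible by `r`, so `G` has no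
`K_{r,r}`-decomposition. -/
theorem tripartite_Krr_not_decomposable (r m : ℕ) (hr : 2 ≤ r) (hre : Even r)
    (hm : 1 ≤ m) :
    (∀ φ : Fin r ⊕ Fin r ↪
        Fin (2 * r ^ 2 * m + r) ⊕ Fin (2 * r ^ 2 * m + 1) ⊕ Fin (2 * r ^ 2 * m - r),
      copyAt (completeBipartiteGraph (Fin r) (Fin r)) φ ≤
        tripartite (2 * r ^ 2 * m + r) (2 * r ^ 2 * m + 1) (2 * r ^ 2 * m - r) →
      r ∣ Nat.card
        ↥{e | e ∈ (copyAt (completeBipartiteGraph (Fin r) (Fin r)) φ).edgeSet ∧ InsideV1 e}) ∧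
    Nat.card ↥{e | e ∈ (tripartite (2 * r ^ 2 * m + r) (2 * r ^ 2 * m + 1)
        (2 * r ^ 2 * m - r)).edgeSet ∧ InsideV1 e} =
      (r ^ 2 * m + r / 2) * (2 * r ^ 2 * m + r - 1) ∧
    ¬ r ∣ (r ^ 2 * m + r / 2) * (2 * r ^ 2 * m + r - 1) ∧
    ¬ HasDecomposition (completeBipartiteGraph (Fin r) (Fin r))
        (tripartite (2 * r ^ 2 * m + r) (2 * r ^ 2 * m + 1) (2 * r ^ 2 * m - r)) :=
  tripartite_Krr_not_decomposable_general r m hr hre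

end Paper
end
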